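/- If (b_1,...,b_k) ∼ Dirichlet(a_1,...,a_k) and the partition is coarsened by merging the first two cells, then (b_1 + b_2, b_3, ..., b_k) ∼ Dirichlet(a_1 + a_2, a_3, ..., a_k). -/

import Mathlib

/-!
Merging the first two coordinates preserves the total sum, so it commutes with normalisation; it
therefore suffices that `(X₀ + X₁, X₂, …)` is again a vector of independent Gamma variables with
the merged parameters. Independence survives because `X₀ + X₁` depends only on a block of
coordinates disjoint from the others. That `X₀ + X₁ ∼ Gamma(a₀ + a₁)` is read off moment
generating functions: tilting the Gamma(`a`, `r`) density by `exp (t x)` gives a multiple of the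
Gamma(`a`, `r - t`) density, so the mgf is `(r / (r - t)) ^ a` for `t < r`, and it is infinite
(the junk value `0` for `mgf`) for `t ≥ r`. Hence the mgfs agree everywhere, and an mgf that is
finite near `0` determines the law, through the characteristic function on the imaginary axis.
-/

open MeasureTheory ProbabilityTheory

/-- A measure `ν` on `Fin k → ℝ` is Dirichlet with parameters `a` if it is the
law of the normalized vector of independent Gamma(a i, 1) random variables. -/
def IsDirichlet {k : ℕ} (a : Fin k → ℝ) (ν : Measure (Fin k → ℝ)) : Prop :=
  ∃ (Ω : Type) (_ : MeasureSpace Ω) (μ : Measure Ω) (_ : IsProbabilityMeasure μ)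
    (X : Fin k → Ω → ℝ), (∀ i, Measurable (X i)) ∧
    iIndepFun X μ ∧
    (∀ i, μ.map (X i) = gammaMeasure (a i) 1) ∧
    ν = μ.map (fun ω i => X i ω / ∑ j, X j ω)

open Real Set

namespace ProbabilityTheory

lemma mgf_id_conv {μ ν : Measure ℝ} [SFinite μ] [SFinite ν] (t : ℝ) :
    mgf id (μ ∗ ν) t = mgf id μ t * mgf id ν t := by
  simp only [mgf, id_eq, Measure.conv]
  rw [integral_map (by fun_prop) (by fun_prop)]
  simp only [mul_add, exp_add]
  exact integral_prod_mul (fun x => exp (t * x)) (fun y => exp (t * y))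

lemma _root_.MeasureTheory.Measure.ext_of_mgf_id_eq {μ ν : Measure ℝ} [IsProbabilityMeasure μ]
    [IsProbabilityMeasure ν] (h0 : 0 ∈ interior (integrableExpSet id μ))
    (h : mgf id μ = mgf id ν) : μ = ν := by
  refine Measure.ext_of_charFun (funext fun t => ?_)
  rw [← complexMGF_id_mul_I, ← complexMGF_id_mul_I]
  exact eqOn_complexMGF_of_mgf h (by simpa using h0)

variable {a r t : ℝ}

lemma integral_gammaMeasure (ha : 0 < a) (hr : 0 < r) (g : ℝ → ℝ) :
    ∫ x, g x ∂gammaMeasure a r = ∫ x, gammaPDFReal a r x * g x := by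
  rw [gammaMeasure, integral_withDensity_eq_integral_toReal_smul (f := gammaPDF a r)
    (measurable_gammaPDFReal a r).ennreal_ofReal (ae_of_all _ fun _ => ENNReal.ofReal_lt_top)]
  simp [gammaPDF, ENNReal.toReal_ofReal (gammaPDFReal_nonneg ha hr _)]

lemma integrable_gammaMeasure_iff (ha : 0 < a) (hr : 0 < r) {g : ℝ → ℝ} :
    Integrable g (gammaMeasure a r) ↔ Integrable (fun x => gammaPDFReal a r x * g x) := by
  rw [gammaMeasure, integrable_withDensity_iff_integrable_smul' (f := gammaPDF a r)
    (measurable_gammaPDFReal a r).ennreal_ofReal (ae_of_all _ fun _ => ENNReal.ofReal_lt_top)]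
  simp [gammaPDF, ENNReal.toReal_ofReal (gammaPDFReal_nonneg ha hr _)]

lemma integral_gammaPDFReal (ha : 0 < a) (hr : 0 < r) : ∫ x, gammaPDFReal a r x = 1 := by
  have := isProbabilityMeasure_gammaMeasure ha hr
  simpa using (integral_gammaMeasure ha hr (fun _ => 1)).symm

lemma integrable_gammaPDFReal (ha : 0 < a) (hr : 0 < r) : Integrable (gammaPDFReal a r) := by
  have := isProbabilityMeasure_gammaMeasure ha hr
  simpa using (integrable_gammaMeasure_iff ha hr (g := fun _ => 1)).mp (integrable_const 1)

lemma gammaPDFReal_mul_exp (hr : 0 ≤ r) (ht : t < r) (x : ℝ) :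
    gammaPDFReal a r x * exp (t * x) = (r / (r - t)) ^ a * gammaPDFReal a (r - t) x := by
  unfold gammaPDFReal
  split_ifs
  · rw [div_rpow hr (sub_pos.2 ht).le]
    field_simp [(rpow_pos_of_pos (sub_pos.2 ht) a).ne']
    rw [mul_assoc, ← exp_add]
    ring_nf
  · simp

lemma integrable_exp_mul_gammaMeasure (ha : 0 < a) (hr : 0 < r) (ht : t < r) :
    Integrable (fun x => exp (t * x)) (gammaMeasure a r) := by
  rw [integrable_gammaMeasure_iff ha hr]
  simp_rw [gammaPDFReal_mul_exp hr.le ht]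
  exact (integrable_gammaPDFReal ha (sub_pos.2 ht)).const_mul _

lemma mgf_id_gammaMeasure_of_lt (ha : 0 < a) (hr : 0 < r) (ht : t < r) :
    mgf id (gammaMeasure a r) t = (r / (r - t)) ^ a := by
  simp_rw [mgf, id, integral_gammaMeasure ha hr, gammaPDFReal_mul_exp hr.le ht]
  rw [integral_const_mul, integral_gammaPDFReal ha (sub_pos.2 ht), mul_one]

lemma not_integrable_exp_mul_gammaMeasure (ha : 0 < a) (hr : 0 < r) (ht : r ≤ t) :
    ¬ Integrable (fun x => exp (t * x)) (gammaMeasure a r) := by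
  rw [integrable_gammaMeasure_iff ha hr]
  intro h
  refine not_integrableOn_Ioi_rpow (a - 1) ?_
  refine ((h.integrableOn (s := Ioi 0)).const_mul (Gamma a / r ^ a)).mono'
    (by fun_prop) ((ae_restrict_iff' measurableSet_Ioi).2 (ae_of_all _ fun x hx => ?_))
  have hx : 0 < x := hx
  have hGa := Gamma_pos_of_pos ha
  have hra := rpow_pos_of_pos hr a
  rw [Real.norm_of_nonneg (rpow_nonneg hx.le _), gammaPDFReal, if_pos hx.le]
  calc x ^ (a - 1) = Gamma a / r ^ a * (r ^ a / Gamma a * x ^ (a - 1) * exp (-(r * x)) *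
        exp (r * x)) := by
          rw [mul_assoc _ (exp _), ← exp_add]; field_simp; simp
    _ ≤ _ := by gcongr

lemma mgf_id_gammaMeasure (ha : 0 < a) (hr : 0 < r) :
    mgf id (gammaMeasure a r) = fun t => if t < r then (r / (r - t)) ^ a else 0 := by
  ext t
  split_ifs with ht
  · exact mgf_id_gammaMeasure_of_lt ha hr ht
  · exact mgf_undef (not_integrable_exp_mul_gammaMeasure ha hr (not_lt.1 ht))

lemma gammaMeasure_conv_gammaMeasure {b : ℝ} (ha : 0 < a) (hb : 0 < b) (hr : 0 < r) :
    gammaMeasure a r ∗ gammaMeasure b r = gammaMeasure (a + b) r := by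
  have := isProbabilityMeasure_gammaMeasure ha hr
  have := isProbabilityMeasure_gammaMeasure hb hr
  have := isProbabilityMeasure_gammaMeasure (add_pos ha hb) hr
  refine (Measure.ext_of_mgf_id_eq ?_ ?_).symm
  · exact interior_maximal (fun t ht => integrable_exp_mul_gammaMeasure (add_pos ha hb) hr ht)
      isOpen_Iio hr
  · ext t
    rw [mgf_id_conv, mgf_id_gammaMeasure ha hr, mgf_id_gammaMeasure hb hr,
      mgf_id_gammaMeasure (add_pos ha hb) hr]
    dsimp only
    split_ifs with ht
    · rw [rpow_add (div_pos hr (sub_pos.2 ht))]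
    · simp

variable {Ω β : Type*} [MeasurableSpace Ω] [MeasurableSpace β] {μ : Measure Ω}

lemma iIndepFun_fin_succ_of_indepFun {n : ℕ} {Y : Fin (n + 1) → Ω → β} (hY : ∀ i, Measurable (Y i))
    (h0 : IndepFun (Y 0) (fun ω (i : Fin n) => Y i.succ ω) μ)
    (hsucc : iIndepFun (fun i : Fin n => Y i.succ) μ) : iIndepFun Y μ := by
  have := hsucc.isProbabilityMeasure
  let e := MeasurableEquiv.piFinSuccAbove (fun _ : Fin (n + 1) => β) 0
  have hsplit : (fun ω i => Y i ω) = e.symm ∘ fun ω => (Y 0 ω, fun i => Y i.succ ω) := by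
    ext ω i
    cases i using Fin.cases <;> simp [e, MeasurableEquiv.piFinSuccAbove_symm_apply]
  have htail : μ.map (fun ω (i : Fin n) => Y i.succ ω) = Measure.pi fun i => μ.map (Y i.succ) :=
    hsucc.map_fun_eq_pi_map fun i => (hY i.succ).aemeasurable
  rw [iIndepFun_iff_map_fun_eq_pi_map fun i => (hY i).aemeasurable, hsplit,
    ← Measure.map_map e.symm.measurable (by fun_prop),
    (indepFun_iff_map_prod_eq_prod_map_map (hY 0).aemeasurable (by fun_prop)).1 h0, htail]
  have := fun i => Measure.isProbabilityMeasure_map (μ := μ) (hY i).aemeasurable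
  exact ((measurePreserving_piFinSuccAbove (fun i => μ.map (Y i)) 0).symm _).map_eq

end ProbabilityTheory

def mergeFirstTwo {M : Type*} [Add M] {k : ℕ} (b : Fin (k + 2) → M) : Fin (k + 1) → M :=
  Fin.cons (b 0 + b 1) fun j => b j.succ.succ

section mergeFirstTwo

variable {M : Type*} {k : ℕ}

@[simp]
lemma mergeFirstTwo_zero [Add M] (b : Fin (k + 2) → M) : mergeFirstTwo b 0 = b 0 + b 1 := rfl

@[simp]
lemma mergeFirstTwo_succ [Add M] (b : Fin (k + 2) → M) (j : Fin k) :
    mergeFirstTwo b j.succ = b j.succ.succ := rfl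

lemma sum_mergeFirstTwo [AddCommMonoid M] (b : Fin (k + 2) → M) :
    ∑ i, mergeFirstTwo b i = ∑ i, b i := by
  simp [Fin.sum_univ_succ (n := k + 1), Fin.sum_univ_succ (n := k), add_assoc]

lemma mergeFirstTwo_div_sum [DivisionSemiring M] (b : Fin (k + 2) → M) :
    mergeFirstTwo (fun i => b i / ∑ j, b j) =
      fun i => mergeFirstTwo b i / ∑ j, mergeFirstTwo b j := by
  ext i
  cases i using Fin.cases <;> simp [sum_mergeFirstTwo, add_div]

lemma measurable_mergeFirstTwo [Add M] [MeasurableSpace M] [MeasurableAdd₂ M] :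
    Measurable (mergeFirstTwo : (Fin (k + 2) → M) → Fin (k + 1) → M) := by
  refine measurable_pi_lambda _ fun i => ?_
  cases i using Fin.cases <;> simp only [mergeFirstTwo_zero, mergeFirstTwo_succ] <;> fun_prop

end mergeFirstTwo

lemma ProbabilityTheory.iIndepFun.mergeFirstTwo {Ω M : Type*} [MeasurableSpace Ω] [Add M]
    [MeasurableSpace M] [MeasurableAdd₂ M] {μ : Measure Ω} {k : ℕ} {X : Fin (k + 2) → Ω → M}
    (hX : ∀ i, Measurable (X i)) (h : iIndepFun X μ) :
    iIndepFun (fun i ω => mergeFirstTwo (fun j => X j ω) i) μ := by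
  refine iIndepFun_fin_succ_of_indepFun (fun i => (measurable_pi_apply i).comp
    (measurable_mergeFirstTwo.comp (measurable_pi_lambda _ hX))) ?_ ?_
  · let S : Finset (Fin (k + 2)) := {0, 1}
    exact (h.indepFun_finset S Sᶜ disjoint_compl_right hX).comp
      (φ := fun v : S → M => v ⟨0, by simp [S]⟩ + v ⟨1, by simp [S]⟩)
      (ψ := fun (v : (Sᶜ : Finset _) → M) (j : Fin k) =>
        v ⟨j.succ.succ, by simp [S, Fin.succ_ne_zero, Fin.succ_succ_ne_one]⟩)
      (by fun_prop) (by fun_prop)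
  · exact h.precomp (Fin.succ_injective _ |>.comp (Fin.succ_injective _))

/-- aggregation property of the Dirichlet distribution. If
`(b_1,…,b_k) ∼ Dirichlet(a_1,…,a_k)` and the first two cells are merged, then
`(b_1 + b_2, b_3, …, b_k) ∼ Dirichlet(a_1 + a_2, a_3, …, a_k)`. -/
theorem dirichlet_aggregation {k : ℕ} (a : Fin (k + 2) → ℝ)
    (hapos : ∀ i, 0 < a i) (ν : Measure (Fin (k + 2) → ℝ))
    (hν : IsDirichlet a ν) :
    IsDirichlet (Fin.cons (a 0 + a 1) (fun j : Fin k => a j.succ.succ))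
      (ν.map (fun b => Fin.cons (b 0 + b 1)
        (fun j : Fin k => b j.succ.succ))) := by
  change IsDirichlet (mergeFirstTwo a) (ν.map mergeFirstTwo)
  obtain ⟨Ω, hΩ, μ, hμ, X, hX, hindep, hlaw, rfl⟩ := hν
  have hXvec : Measurable fun ω i => X i ω := measurable_pi_lambda _ hX
  have hlaw_merge (i : Fin (k + 1)) :
      μ.map (fun ω => mergeFirstTwo (fun j => X j ω) i) = gammaMeasure (mergeFirstTwo a i) 1 := by
    cases i using Fin.cases with
    | zero =>
      rw [mergeFirstTwo_zero, ← gammaMeasure_conv_gammaMeasure (hapos 0) (hapos 1) one_pos,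
        ← hlaw, ← hlaw, ← (hindep.indepFun zero_ne_one).map_add_eq_map_conv_map (hX 0) (hX 1)]
      rfl
    | succ j => exact hlaw j.succ.succ
  refine ⟨Ω, hΩ, μ, hμ, fun i ω => mergeFirstTwo (fun j => X j ω) i,
    fun i => (measurable_pi_apply i).comp (measurable_mergeFirstTwo.comp hXvec),
    hindep.mergeFirstTwo hX, hlaw_merge, ?_⟩
  rw [Measure.map_map measurable_mergeFirstTwo (by fun_prop)]
  exact congrArg (μ.map ·) (funext fun ω => mergeFirstTwo_div_sum _)
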